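/- Let v be an even positive integer. In the polynomial ring ℝ[G₁,…,G_v,H₁,…,H_v], the polynomial (1/C(v,v/2)) · Σ_{T ⊆ {1,…,v}, |T| = v/2} (∏_{i∈T} Gᵢ² · ∏_{i∉T} Hᵢ²) − ∏_{i=1}^{v} Gᵢ Hᵢ is a sum of squares of polynomials, each of degree at most v. -/

import Mathlib

/-!
Write `P = ∏ Gᵢ Hᵢ` and, for `T ⊆ [v]`, `A_T = ∏_{i∈T} Gᵢ ∏_{i∉T} Hᵢ`, so that the summands are
the `A_T²` and `A_T A_{Tᶜ} = P`. Since `v` is even, complementation permutes the `n = C(v,v/2)`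
sets with `|T| = v/2`, hence `∑_T (A_T - A_{Tᶜ})² = 2 ∑_T A_T² - 2nP`, and the polynomial equals
`∑_T ((A_T - A_{Tᶜ}) / √(2n))²`.
-/

open MvPolynomial

theorem Finset.sum_sq_sub_comp_involution {ι R : Type*} [CommRing R] (s : Finset ι)
    (σ : ι → ι) (hσ : ∀ i ∈ s, σ i ∈ s) (hσσ : ∀ i ∈ s, σ (σ i) = i) (a : ι → R) (p : R)
    (hp : ∀ i ∈ s, a i * a (σ i) = p) :
    ∑ i ∈ s, (a i - a (σ i)) ^ 2 = 2 * (∑ i ∈ s, a i ^ 2 - s.card * p) := by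
  have hreindex : ∑ i ∈ s, a (σ i) ^ 2 = ∑ i ∈ s, a i ^ 2 :=
    Finset.sum_nbij' σ σ hσ hσ hσσ hσσ fun _ _ => rfl
  have hexpand : ∀ i ∈ s, (a i - a (σ i)) ^ 2 = a i ^ 2 + a (σ i) ^ 2 - 2 * p := by
    intro i hi
    rw [sub_sq, mul_assoc, hp i hi]
    ring
  rw [Finset.sum_congr rfl hexpand, Finset.sum_sub_distrib, Finset.sum_add_distrib, hreindex,
    Finset.sum_const, nsmul_eq_mul]
  ring

theorem Finset.inv_card_smul_sum_sq_sub_eq_sum_sq {ι A : Type*} [CommRing A] [Algebra ℝ A]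
    (s : Finset ι) (hs : s.Nonempty) (σ : ι → ι) (hσ : ∀ i ∈ s, σ i ∈ s)
    (hσσ : ∀ i ∈ s, σ (σ i) = i) (a : ι → A) (p : A) (hp : ∀ i ∈ s, a i * a (σ i) = p) :
    (s.card : ℝ)⁻¹ • ∑ i ∈ s, a i ^ 2 - p
      = ∑ i ∈ s, ((Real.sqrt (2 * s.card))⁻¹ • (a i - a (σ i))) ^ 2 := by
  have hn : (s.card : ℝ) ≠ 0 := by exact_mod_cast hs.card_pos.ne'
  have hsqrt : (Real.sqrt (2 * s.card))⁻¹ ^ 2 = ((2 : ℝ) * s.card)⁻¹ := by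
    rw [inv_pow, Real.sq_sqrt (by positivity)]
  simp_rw [smul_pow, hsqrt, ← Finset.smul_sum]
  have hscale : (2 : A) * (∑ i ∈ s, a i ^ 2 - s.card * p)
      = ((2 : ℝ) * s.card) • ((s.card : ℝ)⁻¹ • ∑ i ∈ s, a i ^ 2 - p) := by
    rw [smul_sub, smul_smul, mul_assoc, mul_inv_cancel₀ hn, mul_one, mul_smul]
    simp only [Algebra.smul_def, map_ofNat, map_natCast]
    ring
  rw [s.sum_sq_sub_comp_involution σ hσ hσσ a p hp, hscale, smul_smul,
    inv_mul_cancel₀ (by positivity), one_smul]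

namespace MvPolynomial

theorem totalDegree_X_le {σ R : Type*} [CommSemiring R] (k : σ) :
    (X k : MvPolynomial σ R).totalDegree ≤ 1 :=
  (totalDegree_monomial_le _ _).trans_eq (by simp)

variable {ι R : Type*} [Fintype ι] [DecidableEq ι] [CommSemiring R]

noncomputable def crossMonomial (T : Finset ι) : MvPolynomial (ι ⊕ ι) R :=
  (∏ i ∈ T, X (Sum.inl i)) * ∏ i ∈ Tᶜ, X (Sum.inr i)

theorem crossMonomial_mul_compl (T : Finset ι) :
    crossMonomial T * crossMonomial Tᶜ
      = ∏ i, (X (Sum.inl i) * X (Sum.inr i) : MvPolynomial (ι ⊕ ι) R) := by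
  rw [Finset.prod_mul_distrib, ← T.prod_mul_prod_compl,
    ← T.prod_mul_prod_compl (fun i => X (Sum.inr i))]
  simp only [crossMonomial, compl_compl]
  ring

theorem crossMonomial_sq (T : Finset ι) :
    crossMonomial T ^ 2
      = (∏ i ∈ T, X (Sum.inl i) ^ 2) * ∏ i ∈ Tᶜ, (X (Sum.inr i) ^ 2 : MvPolynomial (ι ⊕ ι) R) := by
  rw [crossMonomial, mul_pow, Finset.prod_pow, Finset.prod_pow]

theorem totalDegree_crossMonomial_le (T : Finset ι) :
    (crossMonomial T : MvPolynomial (ι ⊕ ι) R).totalDegree ≤ Fintype.card ι := by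
  have hprod (S : Finset ι) (j : ι → ι ⊕ ι) :
      (∏ i ∈ S, X (j i) : MvPolynomial (ι ⊕ ι) R).totalDegree ≤ S.card :=
    (totalDegree_finsetProd _ _).trans <|
      (Finset.sum_le_sum fun i _ => totalDegree_X_le (j i)).trans_eq (by simp)
  calc (crossMonomial T : MvPolynomial (ι ⊕ ι) R).totalDegree
      ≤ T.card + Tᶜ.card := (totalDegree_mul _ _).trans (add_le_add (hprod _ _) (hprod _ _))
    _ = Fintype.card ι := T.card_add_card_compl

end MvPolynomial

open Finset in
theorem stmt_1 (v : ℕ) (hev : Even v) :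
    ∃ (m : ℕ) (q : Fin m → MvPolynomial (Fin v ⊕ Fin v) ℝ),
      (∀ j, (q j).totalDegree ≤ v) ∧
      C ((v.choose (v/2) : ℝ))⁻¹ *
          ∑ T ∈ Finset.univ.powerset.filter (fun T : Finset (Fin v) => T.card = v/2),
            (∏ i ∈ T, (X (Sum.inl i))^2) * ∏ i ∈ Tᶜ, (X (Sum.inr i))^2
        - ∏ i : Fin v, (X (Sum.inl i) * X (Sum.inr i))
      = ∑ j, (q j)^2 := by
  set S := powersetCard (v / 2) (univ : Finset (Fin v))
  have hcard : S.card = v.choose (v / 2) := by simp [S]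
  have hS : S.Nonempty := powersetCard_nonempty.2 (by simp [Nat.div_le_self])
  have hcompl : ∀ T ∈ S, Tᶜ ∈ S := by
    intro T hT
    obtain ⟨k, rfl⟩ := hev
    simp only [S, mem_powersetCard_univ, card_compl, Fintype.card_fin] at hT ⊢
    omega
  set q : Finset (Fin v) → MvPolynomial (Fin v ⊕ Fin v) ℝ := fun T =>
    (Real.sqrt (2 * S.card))⁻¹ • (crossMonomial T - crossMonomial Tᶜ)
  refine ⟨S.card, fun j => q (S.equivFin.symm j), fun j => ?_, ?_⟩
  · have hdeg (T : Finset (Fin v)) : (crossMonomial T : MvPolynomial _ ℝ).totalDegree ≤ v :=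
      (totalDegree_crossMonomial_le T).trans_eq (Fintype.card_fin v)
    exact (totalDegree_smul_le _ _).trans <|
      (totalDegree_sub _ _).trans <| max_le (hdeg _) (hdeg _)
  rw [← powersetCard_eq_filter, C_mul', ← hcard]
  simp_rw [← crossMonomial_sq]
  rw [S.inv_card_smul_sum_sq_sub_eq_sum_sq hS compl hcompl (fun T _ => compl_compl T)
    crossMonomial _ (fun T _ => crossMonomial_mul_compl T)]
  exact (S.sum_coe_sort (fun T => q T ^ 2)).symm.trans
    (S.equivFin.symm.sum_comp (fun T : S => q T ^ 2)).symm
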